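/- Let W ∈ ℝ^{N×N} be a doubly stochastic matrix, let α ∈ (0,1], let m̂ = (m̂_1,…,m̂_N) ∈ (ℝ^N)^N, set φ = (1/N) Σ_{i=1}^N m̂_i ∈ ℝ^N and Φ = (φ,…,φ) ∈ (ℝ^N)^N. Suppose there exists σ ∈ [0,1) such that ‖(W ⊗ I_N)u‖ ≤ σ‖u‖ for every u = (u_1,…,u_N) ∈ (ℝ^N)^N with Σ_{i=1}^N u_i = 0, where ‖·‖ is the Euclidean norm on (ℝ^N)^N. If z̄ ∈ (ℝ^N)^N satisfies z̄ = (1−α)(W ⊗ I_N) z̄ + α m̂, then ‖z̄ − Φ‖ ≤ α‖m̂ − Φ‖ / (1 − (1−α)σ). -/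
import Mathlib


/-- The stacked space `(ℝ^N)^N` with the Euclidean norm `‖x‖² = Σ_i ‖x_i‖²`. -/
abbrev Blk (N : ℕ) := PiLp 2 (fun _ : Fin N => EuclideanSpace ℝ (Fin N))

/-- The operator `W ⊗ I_N` acting blockwise on `(ℝ^N)^N`:
`((W ⊗ I_N)x)_i = Σ_j w_{ij} x_j`. -/
noncomputable def blockOp {N : ℕ} (W : Matrix (Fin N) (Fin N) ℝ) (x : Blk N) : Blk N :=
  (WithLp.equiv 2 ((_ : Fin N) → EuclideanSpace ℝ (Fin N))).symm fun i => ∑ j, W i j • x j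

lemma blockOp_apply {N : ℕ} (W : Matrix (Fin N) (Fin N) ℝ) (x : Blk N) (i : Fin N) :
    blockOp W x i = ∑ j, W i j • x j := rfl

lemma blockOp_sub {N : ℕ} (W : Matrix (Fin N) (Fin N) ℝ) (x y : Blk N) :
    blockOp W (x - y) = blockOp W x - blockOp W y := by
  ext i k
  simp [blockOp_apply, smul_sub, Finset.sum_sub_distrib]

/-- for a doubly stochastic `W` contracting zero-sum vectors by `σ < 1`,
any fixed point `z̄` of `z ↦ (1−α)(W ⊗ I_N)z + α m̂` satisfies
`‖z̄ − Φ‖ ≤ α‖m̂ − Φ‖/(1 − (1−α)σ)`, where `Φ` stacks the blockwise average of `m̂`. -/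
theorem stmt_11 (N : ℕ) (W : Matrix (Fin N) (Fin N) ℝ)
    (hnonneg : ∀ i j, 0 ≤ W i j)
    (hrow : ∀ i, ∑ j, W i j = 1)
    (hcol : ∀ j, ∑ i, W i j = 1)
    (α : ℝ) (hα0 : 0 < α) (hα1 : α ≤ 1)
    (mh : Blk N)
    (σ : ℝ) (hσ0 : 0 ≤ σ) (hσ1 : σ < 1)
    (hcontr : ∀ u : Blk N, ∑ i, u i = 0 → ‖blockOp W u‖ ≤ σ * ‖u‖)
    (φ : EuclideanSpace ℝ (Fin N)) (hφ : φ = (1 / (N : ℝ)) • ∑ i, mh i)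
    (Φ : Blk N)
    (hΦ : Φ = (WithLp.equiv 2 ((_ : Fin N) → EuclideanSpace ℝ (Fin N))).symm fun _ => φ)
    (zbar : Blk N) (hfix : zbar = (1 - α) • blockOp W zbar + α • mh) :
    ‖zbar - Φ‖ ≤ α * ‖mh - Φ‖ / (1 - (1 - α) * σ) := by
  set u : Blk N := zbar - Φ with hu
  have hΦi : ∀ i, Φ i = φ := by intro i; rw [hΦ]; rfl
  -- blockOp fixes Φ
  have hWΦ : blockOp W Φ = Φ := by
    ext i k
    simp [blockOp_apply, hΦi, ← Finset.sum_smul, hrow i]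
  -- sum of zbar equals sum of mh
  have hsumW : ∑ i, (blockOp W zbar) i = ∑ i, zbar i := by
    simp only [blockOp_apply]
    rw [Finset.sum_comm]
    have : ∀ j ∈ Finset.univ, ∑ i, W i j • zbar j = zbar j := by
      intro j _
      rw [← Finset.sum_smul, hcol j, one_smul]
    rw [Finset.sum_congr rfl this]
  have hsum : ∑ i, zbar i = ∑ i, mh i := by
    have h1 : ∑ i, zbar i
        = (1 - α) • ∑ i, (blockOp W zbar) i + α • ∑ i, mh i := by
      conv_lhs => rw [hfix]
      simp [Finset.sum_add_distrib, Finset.smul_sum]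
    rw [hsumW] at h1
    have h2 : α • ∑ i, zbar i = α • ∑ i, mh i := by
      have := h1
      rw [sub_smul, one_smul] at this
      linear_combination (norm := module) this
    have := smul_right_injective (EuclideanSpace ℝ (Fin N)) (ne_of_gt hα0) h2
    exact this
  -- u is zero-sum
  have hsumu : ∑ i, u i = 0 := by
    have hΦsum : ∑ i, Φ i = (N : ℝ) • φ := by
      rw [Nat.cast_smul_eq_nsmul]
      simp [hΦi]
    have hsmh : (N : ℝ) • φ = ∑ i, mh i := by
      by_cases hN : N = 0
      · subst hN; simp
      · rw [hφ, smul_smul]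
        rw [mul_one_div, div_self (by exact_mod_cast hN), one_smul]
    simp only [hu]
    simp [Finset.sum_sub_distrib, hsum, hΦsum, hsmh]
  -- fixed point identity for u
  have hufix : u = (1 - α) • blockOp W u + α • (mh - Φ) := by
    rw [hu, blockOp_sub, hWΦ]
    nth_rewrite 1 [hfix]
    module
  -- norm estimate
  have hα' : 0 ≤ 1 - α := by linarith
  have hbound : ‖u‖ ≤ (1 - α) * σ * ‖u‖ + α * ‖mh - Φ‖ := by
    calc ‖u‖ = ‖(1 - α) • blockOp W u + α • (mh - Φ)‖ := by rw [← hufix]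
    _ ≤ ‖(1 - α) • blockOp W u‖ + ‖α • (mh - Φ)‖ := norm_add_le _ _
    _ = (1 - α) * ‖blockOp W u‖ + α * ‖mh - Φ‖ := by
        rw [norm_smul, norm_smul, Real.norm_eq_abs, Real.norm_eq_abs,
          abs_of_nonneg hα', abs_of_pos hα0]
    _ ≤ (1 - α) * (σ * ‖u‖) + α * ‖mh - Φ‖ := by
        have := hcontr u hsumu
        nlinarith
    _ = (1 - α) * σ * ‖u‖ + α * ‖mh - Φ‖ := by ring
  have hden : 0 < 1 - (1 - α) * σ := by nlinarith
  rw [le_div_iff₀ hden]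
  nlinarith
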